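/- arXiv:1701.02575 — 4 statements merged into one kernel-verified Lean document; each statement's English description precedes it below -/
import Mathlib

section
/- Let C be a full-dimensional pointed closed convex cone in ℝ^d, let Γ be the set of points of C lying outside some (possibly empty) truncation of C, let V be a countable subset of C, and let U = V + Γ be the Minkowski sum. Then (closure of U) + (interior of C) ⊆ interior of U. -/
open Filter MeasureTheory
open scoped Pointwise

/-- The standard inner product of two vectors of `ℝ^d`. -/
def pairing {d : ℕ} (u a : Fin d → ℝ) : ℝ := ∑ i, u i * a i

/-! Translating by `C` keeps `U` inside itself, since `C` is closed under addition and the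
functional `⟨·, a⟩` is nonnegative on `C`. In a topological group, such a set satisfies
`closure U + interior C = U + interior C`, an open subset of `U`. -/

lemma pairing_add {d : ℕ} (u v a : Fin d → ℝ) :
    pairing (u + v) a = pairing u a + pairing v a := by
  simp [pairing, add_mul, Finset.sum_add_distrib]

lemma pairing_zero_left {d : ℕ} (a : Fin d → ℝ) : pairing 0 a = 0 := by
  simp [pairing]

theorem closure_add_interior_subset_interior_of_add_subset {G : Type*} [TopologicalSpace G]
    [AddGroup G] [IsTopologicalAddGroup G] {s t : Set G} (h : s + t ⊆ s) :
    closure s + interior t ⊆ interior s := by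
  rw [isOpen_interior.closure_add]
  exact interior_maximal ((Set.add_subset_add_left interior_subset).trans h)
    isOpen_interior.add_left

lemma sep_not_pairing_lt_add_subset {d : ℕ} {C : Set (Fin d → ℝ)}
    (hCadd : ∀ u ∈ C, ∀ v ∈ C, u + v ∈ C) {a : Fin d → ℝ}
    (hnonneg : ∀ u ∈ C, 0 ≤ pairing u a) (α : ℝ) :
    {u ∈ C | ¬ pairing u a < α} + C ⊆ {u ∈ C | ¬ pairing u a < α} := by
  rintro _ ⟨γ, ⟨hγC, hγα⟩, c, hc, rfl⟩
  refine ⟨hCadd γ hγC c hc, fun hlt => hγα ?_⟩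
  rw [pairing_add] at hlt
  linarith [hnonneg c hc]

theorem closure_add_interior_subset_interior_general
    (d : ℕ) (C : Set (Fin d → ℝ))
    (hCadd : ∀ u ∈ C, ∀ v ∈ C, u + v ∈ C)
    (a : Fin d → ℝ) (ha : ∀ u ∈ C, u ≠ 0 → 0 < pairing u a)
    (α : ℝ)
    (Γ : Set (Fin d → ℝ)) (hΓ : Γ = {u ∈ C | ¬ pairing u a < α})
    (V : Set (Fin d → ℝ))
    (U : Set (Fin d → ℝ)) (hU : U = V + Γ) :
    closure U + interior C ⊆ interior U := by
  have hnonneg : ∀ u ∈ C, 0 ≤ pairing u a := fun u hu => by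
    rcases eq_or_ne u 0 with rfl | hu0
    · exact (pairing_zero_left a).ge
    · exact (ha u hu hu0).le
  apply closure_add_interior_subset_interior_of_add_subset
  rw [hU, add_assoc, hΓ]
  exact Set.add_subset_add_left (sep_not_pairing_lt_add_subset hCadd hnonneg α)

/-- for `U = V + Γ` with `V ⊆ C` countable and `Γ` the points of `C` outside
a (possibly empty) truncation of `C`, one has `closure U + interior C ⊆ interior U`. -/
theorem closure_add_interior_subset_interior
    (d : ℕ) (C : Set (Fin d → ℝ))
    (hCclosed : IsClosed C)
    (hCsmul : ∀ c : ℝ, 0 ≤ c → ∀ u ∈ C, c • u ∈ C)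
    (hCadd : ∀ u ∈ C, ∀ v ∈ C, u + v ∈ C)
    (hfull : Submodule.span ℝ C = ⊤)
    (a : Fin d → ℝ) (ha : ∀ u ∈ C, u ≠ 0 → 0 < pairing u a)
    (α : ℝ) (hα : 0 ≤ α)
    (Γ : Set (Fin d → ℝ)) (hΓ : Γ = {u ∈ C | ¬ pairing u a < α})
    (V : Set (Fin d → ℝ)) (hVC : V ⊆ C) (hVcnt : V.Countable)
    (U : Set (Fin d → ℝ)) (hU : U = V + Γ) :
    closure U + interior C ⊆ interior U :=
  closure_add_interior_subset_interior_general d C hCadd a ha α Γ hΓ V U hU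
end

section
/- Let C be a full-dimensional pointed closed convex cone in ℝ^d, let Γ be the set of points of C lying outside some (possibly empty) truncation of C, let V be a countable subset of C, let U = V + Γ be the Minkowski sum, and let H be a truncating halfspace for C. Then D = U ∩ H is bounded and Lebesgue measurable, and the limit over positive integers k of #(kD ∩ ℤ^d)/k^d equals the Lebesgue measure of D, where kD = {ku : u ∈ D}. -/
/-!
`U` is an upper set for the cone order: `U + C ⊆ U`. Translating the closure of `U` by a small
positive multiple of an interior point `c` of `C` lands in the interior of `U`, so the translates
of the frontier of `U` in the direction `c` are pairwise disjoint, and translation invariance makes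
the frontier a Lebesgue null set. The frontier of `H` lies in a hyperplane, so `D` has null
frontier; it is bounded because a linear form positive on the pointed cone `C` dominates a
multiple of the norm there, and measurable because `U` is a countable union of translates of the
closed set `Γ`. For a bounded measurable set with null frontier, the normalized lattice point
count is a Riemann sum of its indicator and converges to its volume.
-/

open Filter MeasureTheory
open scoped Pointwise

/-- The set of lattice points `ℤ^d ⊆ ℝ^d`. -/
def latticePts (d : ℕ) : Set (Fin d → ℝ) := {u | ∀ i, ∃ z : ℤ, u i = (z : ℝ)}

open Set Bornology Function

section Cone

variable {E : Type*} [NormedAddCommGroup E] [NormedSpace ℝ E] {C : Set E}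

lemma exists_pos_mul_norm_le_of_pos_on_cone [ProperSpace E] (hC : IsClosed C)
    (hCsmul : ∀ c : ℝ, 0 ≤ c → ∀ u ∈ C, c • u ∈ C) (f : E →L[ℝ] ℝ)
    (hf : ∀ u ∈ C, u ≠ 0 → 0 < f u) : ∃ m > 0, ∀ u ∈ C, m * ‖u‖ ≤ f u := by
  have hsphere : ∀ u ∈ C ∩ Metric.sphere 0 1, 0 < f u := fun u hu =>
    hf u hu.1 (ne_zero_of_mem_unit_sphere ⟨u, hu.2⟩)
  obtain ⟨m, hm, hmin⟩ := ((isCompact_sphere 0 1).inter_left hC).exists_forall_le'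
    f.continuous.continuousOn hsphere
  refine ⟨m, hm, fun u hu => ?_⟩
  rcases eq_or_ne u 0 with rfl | hu0
  · simp
  have hnorm : 0 < ‖u‖ := norm_pos_iff.2 hu0
  have hunit : ‖u‖⁻¹ • u ∈ C ∩ Metric.sphere 0 1 :=
    ⟨hCsmul _ (inv_nonneg.2 hnorm.le) u hu, by simp [norm_smul, hnorm.ne']⟩
  have := hmin _ hunit
  rw [map_smul, smul_eq_mul, le_inv_mul_iff₀ hnorm] at this
  linarith

lemma isBounded_inter_setOf_le_of_pos_on_cone [ProperSpace E] (hC : IsClosed C)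
    (hCsmul : ∀ c : ℝ, 0 ≤ c → ∀ u ∈ C, c • u ∈ C) (f : E →L[ℝ] ℝ)
    (hf : ∀ u ∈ C, u ≠ 0 → 0 < f u) (β : ℝ) : IsBounded (C ∩ {u | f u ≤ β}) := by
  obtain ⟨m, hm, hmf⟩ := exists_pos_mul_norm_le_of_pos_on_cone hC hCsmul f hf
  refine (Metric.isBounded_closedBall (x := 0) (r := β / m)).subset fun u ⟨hu, huβ⟩ => ?_
  rw [mem_closedBall_zero_iff, le_div_iff₀' hm]
  exact (hmf u hu).trans huβ

lemma interior_nonempty_of_span_eq_top [FiniteDimensional ℝ E] (hne : C.Nonempty)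
    (hCsmul : ∀ c : ℝ, 0 ≤ c → ∀ u ∈ C, c • u ∈ C) (hCadd : ∀ u ∈ C, ∀ v ∈ C, u + v ∈ C)
    (hspan : Submodule.span ℝ C = ⊤) : (interior C).Nonempty := by
  obtain ⟨u, hu⟩ := hne
  have h0 : (0 : E) ∈ C := by simpa using hCsmul 0 le_rfl u hu
  have hconv : Convex ℝ C := fun x hx y hy p q hp hq _ =>
    hCadd _ (hCsmul p hp x hx) _ (hCsmul q hq y hy)
  rw [hconv.interior_nonempty_iff_affineSpan_eq_top,
    AffineSubspace.affineSpan_eq_top_iff_vectorSpan_eq_top_of_nonempty ℝ _ _ ⟨u, hu⟩,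
    vectorSpan_eq_span_vsub_set_right ℝ h0]
  simpa using hspan

lemma smul_mem_interior_of_cone (hCsmul : ∀ c : ℝ, 0 ≤ c → ∀ u ∈ C, c • u ∈ C) {t : ℝ}
    (ht : 0 < t) {c : E} (hc : c ∈ interior C) : t • c ∈ interior C := by
  have hsub : t • C ⊆ C := by
    rintro _ ⟨u, hu, rfl⟩
    exact hCsmul t ht.le u hu
  exact interior_mono hsub (by rw [interior_smul₀ ht.ne']; exact smul_mem_smul_set hc)

lemma sep_le_add_subset (hCadd : ∀ u ∈ C, ∀ v ∈ C, u + v ∈ C) (f : E →L[ℝ] ℝ)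
    (hf : ∀ u ∈ C, u ≠ 0 → 0 < f u) (α : ℝ) :
    {u ∈ C | α ≤ f u} + C ⊆ {u ∈ C | α ≤ f u} := by
  refine add_subset_iff.2 fun u ⟨hu, hαu⟩ v hv => ⟨hCadd u hu v hv, ?_⟩
  have hfv : 0 ≤ f v := by
    rcases eq_or_ne v 0 with rfl | hv0
    · rw [map_zero]
    · exact (hf v hv hv0).le
  rw [map_add]
  linarith

end Cone

lemma closure_add_interior_subset_interior_s3 {G : Type*} [AddGroup G] [TopologicalSpace G]
    [IsTopologicalAddGroup G] {U C : Set G} (h : U + C ⊆ U) :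
    closure U + interior C ⊆ interior U := by
  rw [isOpen_interior.closure_add]
  exact interior_maximal ((add_subset_add_left interior_subset).trans h)
    isOpen_interior.add_left

lemma Set.Countable.measurableSet_add {G : Type*} [AddGroup G] [MeasurableSpace G]
    [MeasurableAdd G] {V Γ : Set G} (hV : V.Countable) (hΓ : MeasurableSet Γ) :
    MeasurableSet (V + Γ) := by
  rw [← iUnion_add_left_image]
  refine .biUnion hV fun v _ => ?_
  rw [image_add_left]
  exact measurable_const_add (-v) hΓ

lemma measure_eq_zero_of_pairwise_disjoint_vadd {G : Type*} [AddGroup G] [MeasurableSpace G]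
    [MeasurableAdd G] (μ : Measure G) [μ.IsAddLeftInvariant] {s : Set G}
    (hs : MeasurableSet s) (t : ℕ → G) (hdisj : Pairwise (Disjoint on (fun n => t n +ᵥ s)))
    (hfin : μ (⋃ n, t n +ᵥ s) ≠ ⊤) : μ s = 0 := by
  by_contra h
  have hle := tsum_meas_le_meas_iUnion_of_disjoint μ (fun n => hs.const_vadd (t n)) hdisj
  simp only [measure_vadd, ENNReal.tsum_const_eq_top_of_ne_zero h] at hle
  exact hfin (top_le_iff.1 hle)

section NullFrontier

variable {E : Type*} [NormedAddCommGroup E] [NormedSpace ℝ E] [MeasurableSpace E] [BorelSpace E]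
  [FiniteDimensional ℝ E] (μ : Measure E) [μ.IsAddHaarMeasure]

lemma measure_frontier_eq_zero_of_add_smul_mem_interior {U : Set E} {c : E}
    (hc : ∀ t : ℝ, 0 < t → ∀ x ∈ closure U, x + t • c ∈ interior U) :
    μ (frontier U) = 0 := by
  have hcover : frontier U ⊆ ⋃ R : ℕ, frontier U ∩ Metric.closedBall 0 R := fun x hx =>
    mem_iUnion.2 ⟨⌈‖x‖⌉₊, hx, mem_closedBall_zero_iff.2 (Nat.le_ceil _)⟩
  refine measure_mono_null hcover (measure_iUnion_null fun R => ?_)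
  set t : ℕ → E := fun n => (1 / (n + 1) : ℝ) • c
  refine measure_eq_zero_of_pairwise_disjoint_vadd μ
    (isClosed_frontier.inter Metric.isClosed_closedBall).measurableSet t ?_ ?_
  · -- a common point of two translates would put a frontier point into `interior U`
    refine (pairwise_disjoint_on _).2 fun m n hmn => disjoint_left.2 ?_
    rintro _ ⟨x, hx, rfl⟩ ⟨y, hy, hyx⟩
    have hlt : (1 / (n + 1) : ℝ) < 1 / (m + 1) := by gcongr
    have hy_eq : y = x + (1 / (m + 1) - 1 / (n + 1) : ℝ) • c := by
      simp only [t, vadd_eq_add] at hyx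
      rw [sub_smul, ← sub_eq_zero, ← sub_eq_zero_of_eq hyx]
      abel
    exact hy.1.2 (hy_eq ▸ hc _ (sub_pos.2 hlt) x hx.1.1)
  · refine ne_top_of_le_ne_top (measure_closedBall_lt_top (x := 0) (r := ‖c‖ + R)).ne
      (measure_mono (iUnion_subset fun n => ?_))
    rintro _ ⟨x, hx, rfl⟩
    have hn : (1 / (n + 1) : ℝ) ≤ 1 := by
      rw [div_le_one (by positivity)]
      linarith [n.cast_nonneg (α := ℝ)]
    rw [mem_closedBall_zero_iff]
    calc ‖t n +ᵥ x‖ = ‖t n + x‖ := rfl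
      _ ≤ ‖t n‖ + ‖x‖ := norm_add_le _ _
      _ ≤ ‖c‖ + R := by
        gcongr
        · simp only [t, norm_smul]
          rw [Real.norm_of_nonneg (by positivity)]
          exact mul_le_of_le_one_left (norm_nonneg c) hn
        · exact mem_closedBall_zero_iff.1 hx.2

lemma measure_frontier_eq_zero_of_add_cone_subset {C U : Set E}
    (hCsmul : ∀ c : ℝ, 0 ≤ c → ∀ u ∈ C, c • u ∈ C) (hCadd : ∀ u ∈ C, ∀ v ∈ C, u + v ∈ C)
    (hspan : Submodule.span ℝ C = ⊤) (hUC : U ⊆ C) (hU : U + C ⊆ U) :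
    μ (frontier U) = 0 := by
  rcases U.eq_empty_or_nonempty with rfl | ⟨u, hu⟩
  · simp
  obtain ⟨c, hc⟩ := interior_nonempty_of_span_eq_top ⟨u, hUC hu⟩ hCsmul hCadd hspan
  exact measure_frontier_eq_zero_of_add_smul_mem_interior μ fun t ht x hx =>
    closure_add_interior_subset_interior_s3 hU
      (add_mem_add hx (smul_mem_interior_of_cone hCsmul ht hc))

lemma measure_setOf_eq_eq_zero {f : E →L[ℝ] ℝ} (hf : f ≠ 0) (β : ℝ) :
    μ {u | f u = β} = 0 := by
  obtain ⟨v, hv⟩ : ∃ v, f v ≠ 0 := by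
    by_contra! h
    exact hf (ContinuousLinearMap.ext h)
  let A : AffineSubspace ℝ E := (AffineSubspace.mk' β ⊥).comap f.toLinearMap.toAffineMap
  have hA : (A : Set E) = {u | f u = β} := by
    ext u
    simp [A, AffineSubspace.mem_mk', sub_eq_zero]
  rw [← hA]
  refine Measure.addHaar_affineSubspace μ A fun htop => ?_
  have h : f (((β + 1) / f v) • v) = β := by
    have hmem : ((β + 1) / f v) • v ∈ (A : Set E) := htop ▸ AffineSubspace.mem_top ℝ E _
    rwa [hA] at hmem
  rw [map_smul, smul_eq_mul, div_mul_cancel₀ _ hv] at h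
  linarith

lemma measure_frontier_setOf_lt_eq_zero (f : E →L[ℝ] ℝ) (β : ℝ) :
    μ (frontier {u | f u < β}) = 0 := by
  rcases eq_or_ne f 0 with rfl | hf
  · by_cases hβ : 0 < β <;> simp [hβ]
  · exact measure_mono_null (frontier_lt_subset_eq f.continuous continuous_const)
      (measure_setOf_eq_eq_zero μ hf β)

end NullFrontier

section Lattice

variable {d : ℕ}

lemma latticePts_eq_span : latticePts d = Submodule.span ℤ (range (Pi.basisFun ℝ (Fin d))) := by
  ext u
  simp [latticePts, (Pi.basisFun ℝ (Fin d)).mem_span_iff_repr_mem ℤ, eq_comm]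

lemma natCard_smul_inter_eq {E : Type*} [AddCommGroup E] [Module ℝ E] {c : ℝ} (hc : c ≠ 0)
    (A B : Set E) : Nat.card ↥(c • A ∩ B) = Nat.card ↥(A ∩ c⁻¹ • B) := by
  rw [← Nat.card_image_of_injective (smul_right_injective E hc) (A ∩ c⁻¹ • B), image_smul,
    smul_set_inter₀ hc, smul_inv_smul₀ hc]

theorem tendsto_natCard_smul_inter_latticePts_div_pow {D : Set (Fin d → ℝ)}
    (hbdd : IsBounded D) (hmeas : MeasurableSet D) (hfr : volume (frontier D) = 0) :
    Tendsto (fun k : ℕ => (Nat.card ↥((k : ℝ) • D ∩ latticePts d) : ℝ) / (k : ℝ) ^ d)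
      atTop (nhds (volume D).toReal) := by
  have h := tendsto_card_div_pow_atTop_volume D hbdd hmeas hfr
  rw [Fintype.card_fin] at h
  refine h.congr' ?_
  filter_upwards [eventually_ne_atTop 0] with k hk
  rw [latticePts_eq_span, natCard_smul_inter_eq (Nat.cast_ne_zero.2 hk)]

end Lattice

noncomputable def pairingCLM {d : ℕ} (b : Fin d → ℝ) : (Fin d → ℝ) →L[ℝ] ℝ :=
  LinearMap.toContinuousLinearMap ((dotProductBilin ℝ ℝ).flip b)

@[simp]
lemma pairingCLM_apply {d : ℕ} (b u : Fin d → ℝ) : pairingCLM b u = pairing u b := rfl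

theorem riemann_lattice_point_count_general
    (d : ℕ) (C : Set (Fin d → ℝ))
    (hCclosed : IsClosed C)
    (hCsmul : ∀ c : ℝ, 0 ≤ c → ∀ u ∈ C, c • u ∈ C)
    (hCadd : ∀ u ∈ C, ∀ v ∈ C, u + v ∈ C)
    (hfull : Submodule.span ℝ C = ⊤)
    (a : Fin d → ℝ) (ha : ∀ u ∈ C, u ≠ 0 → 0 < pairing u a)
    (α : ℝ)
    (Γ : Set (Fin d → ℝ)) (hΓ : Γ = {u ∈ C | ¬ pairing u a < α})
    (V : Set (Fin d → ℝ)) (hVC : V ⊆ C) (hVcnt : V.Countable)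
    (U : Set (Fin d → ℝ)) (hU : U = V + Γ)
    (b : Fin d → ℝ) (hb : ∀ u ∈ C, u ≠ 0 → 0 < pairing u b)
    (β : ℝ)
    (H : Set (Fin d → ℝ)) (hH : H = {u | pairing u b < β})
    (D : Set (Fin d → ℝ)) (hD : D = U ∩ H) :
    Bornology.IsBounded D ∧ MeasurableSet D ∧
      Tendsto (fun k : ℕ => (Nat.card ↥((k : ℝ) • D ∩ latticePts d) : ℝ) / (k : ℝ) ^ d)
        atTop (nhds (volume D).toReal) := by
  have hΓ' : Γ = {u ∈ C | α ≤ pairingCLM a u} := by simp only [hΓ, not_lt, pairingCLM_apply]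
  have hΓC : Γ ⊆ C := hΓ' ▸ sep_subset C _
  have hUC : U ⊆ C := hU ▸ (add_subset_add hVC hΓC).trans (add_subset_iff.2 hCadd)
  have hUadd : U + C ⊆ U := by
    rw [hU, add_assoc, hΓ']
    exact add_subset_add_left (sep_le_add_subset hCadd (pairingCLM a) ha α)
  have hΓclosed : IsClosed Γ :=
    hΓ' ▸ hCclosed.inter (isClosed_le continuous_const (pairingCLM a).continuous)
  have hUmeas : MeasurableSet U := hU ▸ hVcnt.measurableSet_add hΓclosed.measurableSet
  subst hD hH
  have hDbdd : IsBounded (U ∩ {u | pairing u b < β}) :=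
    (isBounded_inter_setOf_le_of_pos_on_cone hCclosed hCsmul (pairingCLM b) hb β).subset
      fun u hu => ⟨hUC hu.1, (show pairing u b < β from hu.2).le⟩
  have hDmeas : MeasurableSet (U ∩ {u | pairing u b < β}) :=
    hUmeas.inter (measurableSet_lt (pairingCLM b).measurable measurable_const)
  have hDfr : volume (frontier (U ∩ {u | pairing u b < β})) = 0 :=
    measure_mono_null
      ((frontier_inter_subset _ _).trans (union_subset_union inter_subset_left inter_subset_right))
      (measure_union_null
        (measure_frontier_eq_zero_of_add_cone_subset volume hCsmul hCadd hfull hUC hUadd)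
        (measure_frontier_setOf_lt_eq_zero volume (pairingCLM b) β))
  exact ⟨hDbdd, hDmeas, tendsto_natCard_smul_inter_latticePts_div_pow hDbdd hDmeas hDfr⟩

/-- for `U = V + Γ` as in the setup and `H` a truncating halfspace for `C`,
the set `D = U ∩ H` is bounded and measurable, and `#(kD ∩ ℤ^d)/k^d → vol(D)`. -/
theorem riemann_lattice_point_count
    (d : ℕ) (C : Set (Fin d → ℝ))
    (hCclosed : IsClosed C)
    (hCsmul : ∀ c : ℝ, 0 ≤ c → ∀ u ∈ C, c • u ∈ C)
    (hCadd : ∀ u ∈ C, ∀ v ∈ C, u + v ∈ C)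
    (hfull : Submodule.span ℝ C = ⊤)
    (a : Fin d → ℝ) (ha : ∀ u ∈ C, u ≠ 0 → 0 < pairing u a)
    (α : ℝ) (hα : 0 ≤ α)
    (Γ : Set (Fin d → ℝ)) (hΓ : Γ = {u ∈ C | ¬ pairing u a < α})
    (V : Set (Fin d → ℝ)) (hVC : V ⊆ C) (hVcnt : V.Countable)
    (U : Set (Fin d → ℝ)) (hU : U = V + Γ)
    (b : Fin d → ℝ) (hb : ∀ u ∈ C, u ≠ 0 → 0 < pairing u b)
    (β : ℝ) (hβ : 0 ≤ β)
    (H : Set (Fin d → ℝ)) (hH : H = {u | pairing u b < β})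
    (D : Set (Fin d → ℝ)) (hD : D = U ∩ H) :
    Bornology.IsBounded D ∧ MeasurableSet D ∧
      Tendsto (fun k : ℕ => (Nat.card ↥((k : ℝ) • D ∩ latticePts d) : ℝ) / (k : ℝ) ^ d)
        atTop (nhds (volume D).toReal) :=
  riemann_lattice_point_count_general d C hCclosed hCsmul hCadd hfull a ha α Γ hΓ V hVC hVcnt U hU b
    hb β H hH D hD
end

section
/- Let (R,m) be a Noetherian local ring of Krull dimension d ≥ 1, let p be a prime, and let I_• = {I_q} be a sequence of ideals of R indexed by the powers q = p^e of p such that m^{cq} ⊆ I_q for some fixed positive integer c and all q. Let x be a nonzerodivisor of R and let L_• = {L_q} be a sequence of ideals with I_q ⊆ L_q ⊆ (I_q : x) for every q. Then there exists a real number γ > 0 such that 0 ≤ ℓ_R(R/I_q) − ℓ_R(R/L_q) ≤ γ·q^{d−1} for every q. -/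
open Filter IsLocalRing

/-- The length of the `R`-module `M`: the supremum of lengths of chains of submodules,
truncated to a natural number (it is finite for the modules considered here). -/
noncomputable def lengthNat (R M : Type*) [Ring R] [AddCommGroup M] [Module R M] : ℕ :=
  (WithBot.unbotD 0 (Order.krullDim (Submodule R M))).toNat

/-!
Multiplication by `x` gives an exact sequence `0 → R/(I : x) → R/I → R/(I + xR) → 0`, so
`ℓ(R/I_q) - ℓ(R/L_q) ≤ ℓ(R/(I_q + xR)) ≤ ℓ(R/(mⁿ + xR))` with `n = cq`. As `x` is a
nonzerodivisor, `R/xR` has dimension at most `d - 1`, so some `y₁, …, y_s ∈ m` with `s ≤ d - 1`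
generate an `m`-primary ideal modulo `x`. Then `(y₁ⁿ, …, y_sⁿ) ⊆ mⁿ`, and peeling off one `yᵢ` at
a time with the same exact sequence bounds `ℓ(R/((y₁ⁿ, …, y_sⁿ) + xR))` by
`nˢ · ℓ(R/((y₁, …, y_s) + xR)) = O(q^{d-1})`.
-/

lemma lengthNat_eq_toNat_length (R M : Type*) [Ring R] [AddCommGroup M] [Module R M] :
    lengthNat R M = (Module.length R M).toNat := by
  rw [lengthNat, ← Module.coe_length, WithBot.unbotD_coe]

lemma ENat.toNat_le_toNat_and_sub_le {a b : ℕ∞} {K : ℕ} (hb : b ≠ ⊤) (hab : a ≤ b)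
    (hba : b ≤ a + K) : (a.toNat : ℝ) ≤ b.toNat ∧ (b.toNat : ℝ) - a.toNat ≤ K := by
  lift b to ℕ using hb
  lift a to ℕ using ne_top_of_le_ne_top (ENat.natCast_ne_top b) hab
  norm_cast at hab hba
  simp only [ENat.toNat_natCast]
  constructor
  · exact_mod_cast hab
  · rw [sub_le_iff_le_add']
    exact_mod_cast hba

namespace Ideal

variable {R : Type*} [CommRing R]

lemma length_quotient_le_of_le {I J : Ideal R} (h : I ≤ J) :
    Module.length R (R ⧸ J) ≤ Module.length R (R ⧸ I) :=
  Module.length_le_of_surjective _ (Submodule.factor_surjective h)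

lemma torsionOf_mk_eq_colon (I : Ideal R) (x : R) :
    torsionOf R (R ⧸ I) (Ideal.Quotient.mk I x) = I.colon (span {x}) := by
  ext r
  rw [mem_torsionOf_iff, mem_colon_span_singleton, ← Quotient.eq_zero_iff_mem, map_mul,
    Algebra.smul_def, Quotient.algebraMap_eq]

lemma length_quotient_eq_length_quotient_colon_add (I : Ideal R) (x : R) :
    Module.length R (R ⧸ I) =
      Module.length R (R ⧸ I.colon (span {x})) + Module.length R (R ⧸ (I ⊔ span {x})) := by
  let N : Submodule R (R ⧸ I) := R ∙ Ideal.Quotient.mk I x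
  have hN : N = Submodule.map (Submodule.mkQ I) (span {x}) := by
    simp [N, span, Submodule.map_span]
  rw [Module.length_eq_add_of_exact N.subtype N.mkQ N.injective_subtype N.mkQ_surjective
    (LinearMap.exact_subtype_mkQ N), ← torsionOf_mk_eq_colon,
    (quotTorsionOfEquivSpanSingleton R _ _).length_eq]
  congr 1
  rw [hN, (Submodule.quotientQuotientEquivQuotientSup I _).length_eq]

lemma length_quotient_sup_span_pow_le (W : Ideal R) (y : R) (n : ℕ) :
    Module.length R (R ⧸ (W ⊔ span {y ^ n})) ≤ n * Module.length R (R ⧸ (W ⊔ span {y})) := by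
  induction n with
  | zero => simp [Module.length_eq_zero]
  | succ n ih =>
    set I := W ⊔ span {y ^ (n + 1)}
    have hcolon : W ⊔ span {y} ≤ I.colon (span {y ^ n}) := by
      refine sup_le (fun r hr => ?_) ((span_singleton_le_iff_mem _).mpr ?_)
      · exact mem_colon_span_singleton.mpr (mem_sup_left (W.mul_mem_right _ hr))
      · rw [mem_colon_span_singleton, ← pow_succ']
        exact mem_sup_right (mem_span_singleton_self _)
    have hsup : I ⊔ span {y ^ n} = W ⊔ span {y ^ n} := by
      refine le_antisymm (sup_le (sup_le le_sup_left ?_) le_sup_right)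
        (sup_le_sup_right le_sup_left _)
      exact (span_singleton_le_span_singleton.mpr (pow_dvd_pow y n.le_succ)).trans le_sup_right
    calc Module.length R (R ⧸ I)
        = Module.length R (R ⧸ I.colon (span {y ^ n}))
            + Module.length R (R ⧸ (W ⊔ span {y ^ n})) := by
          rw [length_quotient_eq_length_quotient_colon_add, hsup]
      _ ≤ Module.length R (R ⧸ (W ⊔ span {y})) + n * Module.length R (R ⧸ (W ⊔ span {y})) :=
          add_le_add (length_quotient_le_of_le hcolon) ih
      _ = (n + 1 : ℕ) * Module.length R (R ⧸ (W ⊔ span {y})) := by push_cast; ring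

lemma length_quotient_sup_span_image_pow_le (W : Ideal R) (s : Finset R) (n : ℕ) :
    Module.length R (R ⧸ (W ⊔ span ((· ^ n) '' s))) ≤
      n ^ s.card * Module.length R (R ⧸ (W ⊔ span s)) := by
  classical
  induction s using Finset.induction_on generalizing W with
  | empty => rw [Finset.coe_empty, Set.image_empty, Finset.card_empty, pow_zero, one_mul]
  | insert a s ha ih =>
    calc Module.length R (R ⧸ (W ⊔ span ((· ^ n) '' (↑(insert a s) : Set R))))
        = Module.length R (R ⧸ ((W ⊔ span ((· ^ n) '' s)) ⊔ span {a ^ n})) := by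
          rw [Finset.coe_insert, Set.image_insert_eq, span_insert, sup_comm (span _), sup_assoc]
      _ ≤ n * Module.length R (R ⧸ ((W ⊔ span {a}) ⊔ span ((· ^ n) '' s))) := by
          rw [sup_right_comm W (span {a})]
          exact length_quotient_sup_span_pow_le _ a n
      _ ≤ n * (n ^ s.card * Module.length R (R ⧸ ((W ⊔ span {a}) ⊔ span s))) :=
          mul_le_mul_right (ih _) _
      _ = (n : ℕ∞) ^ (insert a s).card *
            Module.length R (R ⧸ (W ⊔ span (↑(insert a s) : Set R))) := by
          rw [Finset.card_insert_of_notMem ha, Finset.coe_insert, span_insert, ← sup_assoc]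
          ring

end Ideal

lemma ringKrullDim_quotient_span_singleton_le {R : Type*} [CommRing R] {x : R}
    (hx : x ∈ nonZeroDivisors R) {d : ℕ} (hd : ringKrullDim R ≤ d) :
    ringKrullDim (R ⧸ Ideal.span {x}) ≤ (d - 1 : ℕ) := by
  have hlt : ringKrullDim (R ⧸ Ideal.span {x}) < d :=
    ENat.WithBot.add_one_le_natCast_iff.mp
      ((ringKrullDim_quotient_succ_le_of_nonZeroDivisor hx).trans hd)
  refine ENat.WithBot.lt_add_one_iff.mp (hlt.trans_le ?_)
  exact_mod_cast (by omega : d ≤ d - 1 + 1)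

namespace IsLocalRing

open Ideal

variable {R : Type*} [CommRing R] [IsNoetherianRing R] [IsLocalRing R]

lemma length_quotient_ne_top_of_mem_minimalPrimes {I : Ideal R}
    (h : maximalIdeal R ∈ I.minimalPrimes) : Module.length R (R ⧸ I) ≠ ⊤ :=
  have := quotient_artinian_of_mem_minimalPrimes_of_isLocalRing I h
  have : IsArtinian R (R ⧸ I) :=
    isArtinian_of_surjective_algebraMap (Ideal.Quotient.mk_surjective (I := I))
  Module.length_ne_top

lemma length_quotient_ne_top_of_maximalIdeal_pow_le {I : Ideal R} {n : ℕ}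
    (h : maximalIdeal R ^ n ≤ I) : Module.length R (R ⧸ I) ≠ ⊤ := by
  refine ne_top_of_le_ne_top ?_ (length_quotient_le_of_le h)
  rcases eq_or_ne n 0 with rfl | hn
  · simp [Module.length_eq_zero]
  · refine length_quotient_ne_top_of_mem_minimalPrimes ?_
    rw [← radical_minimalPrimes, radical_pow _ hn, (maximalIdeal.isMaximal R).isPrime.radical,
      minimalPrimes_eq_subsingleton_self]
    rfl

/-- A system of parameters of `R ⧸ W`, lifted to `R`. -/
lemma exists_finset_card_le_maximalIdeal_mem_minimalPrimes_sup {W : Ideal R} (hW : W ≠ ⊤)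
    {δ : ℕ} (hδ : ringKrullDim (R ⧸ W) ≤ δ) :
    ∃ s : Finset R, s.card ≤ δ ∧ maximalIdeal R ∈ (W ⊔ span s).minimalPrimes := by
  classical
  have : Nontrivial (R ⧸ W) := Quotient.nontrivial_iff.mpr hW
  have : IsLocalRing (R ⧸ W) := .of_surjective' _ Ideal.Quotient.mk_surjective
  obtain ⟨t, ht, hcard⟩ :=
    exists_finset_card_eq_height_of_isNoetherianRing (maximalIdeal (R ⧸ W))
  let lift := Function.surjInv (Ideal.Quotient.mk_surjective (I := W))
  refine ⟨t.image lift, ?_, mem_minimalPrimes_sup (le_maximalIdeal hW) ?_⟩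
  · rw [Finset.card_image_of_injective _ (Function.injective_surjInv _)]
    have : (t.card : WithBot ℕ∞) ≤ δ := by
      rw [← maximalIdeal_height_eq_ringKrullDim] at hδ
      exact_mod_cast hcard ▸ hδ
    exact_mod_cast this
  · rw [map_maximalIdeal_of_surjective _ Ideal.Quotient.mk_surjective, map_span, Finset.coe_image,
      ← Set.image_comp, Function.comp_surjInv, Set.image_id]
    exact ht

theorem exists_length_quotient_maximalIdeal_pow_sup_le (W : Ideal R) {δ : ℕ}
    (hδ : ringKrullDim (R ⧸ W) ≤ δ) :
    ∃ C : ℕ, ∀ n : ℕ, Module.length R (R ⧸ (maximalIdeal R ^ n ⊔ W)) ≤ (C * n ^ δ : ℕ) := by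
  rcases eq_or_ne W ⊤ with rfl | hW
  · exact ⟨0, fun n => by simp [Module.length_eq_zero]⟩
  obtain ⟨s, hcard, hs⟩ := exists_finset_card_le_maximalIdeal_mem_minimalPrimes_sup hW hδ
  have hsm : (s : Set R) ⊆ maximalIdeal R := fun y hy => hs.1.2 (mem_sup_right (subset_span hy))
  refine ⟨(Module.length R (R ⧸ (W ⊔ span s))).toNat, fun n => ?_⟩
  rcases eq_or_ne n 0 with rfl | hn
  · simp [Module.length_eq_zero]
  have hpow : span ((· ^ n) '' s) ≤ maximalIdeal R ^ n :=
    span_le.mpr (Set.image_subset_iff.mpr fun y hy => pow_mem_pow (hsm hy) n)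
  calc Module.length R (R ⧸ (maximalIdeal R ^ n ⊔ W))
      ≤ Module.length R (R ⧸ (W ⊔ span ((· ^ n) '' s))) :=
        length_quotient_le_of_le (sup_le le_sup_right (hpow.trans le_sup_left))
    _ ≤ n ^ s.card * Module.length R (R ⧸ (W ⊔ span s)) :=
        length_quotient_sup_span_image_pow_le W s n
    _ ≤ (n ^ δ * (Module.length R (R ⧸ (W ⊔ span s))).toNat : ℕ) := by
        rw [Nat.cast_mul, ENat.natCast_toNat (length_quotient_ne_top_of_mem_minimalPrimes hs)]
        gcongr
        exact_mod_cast Nat.pow_le_pow_right (Nat.pos_of_ne_zero hn) hcard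
    _ = _ := by rw [mul_comm]

end IsLocalRing

theorem length_difference_bound_for_colon_squeeze_general
    (R : Type*) [CommRing R] [IsNoetherianRing R] [IsLocalRing R]
    (d : ℕ) (hd : ringKrullDim R = d)
    (p : ℕ)
    (I L : ℕ → Ideal R) (c : ℕ)
    (hI : ∀ e : ℕ, (maximalIdeal R) ^ (c * p ^ e) ≤ I e)
    (x : R) (hx : x ∈ nonZeroDivisors R)
    (hIL : ∀ e : ℕ, I e ≤ L e)
    (hLcolon : ∀ e : ℕ, L e ≤ (I e).colon (Ideal.span {x})) :
    ∃ γ : ℝ, 0 < γ ∧ ∀ e : ℕ,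
      (lengthNat R (R ⧸ L e) : ℝ) ≤ (lengthNat R (R ⧸ I e) : ℝ) ∧
      (lengthNat R (R ⧸ I e) : ℝ) - (lengthNat R (R ⧸ L e) : ℝ)
        ≤ γ * (p : ℝ) ^ (e * (d - 1)) := by
  obtain ⟨C, hC⟩ := exists_length_quotient_maximalIdeal_pow_sup_le (Ideal.span {x})
    (ringKrullDim_quotient_span_singleton_le hx hd.le)
  refine ⟨C * c ^ (d - 1) + 1, by positivity, fun e => ?_⟩
  have hcolon : Module.length R (R ⧸ I e) ≤
      Module.length R (R ⧸ L e) + Module.length R (R ⧸ (I e ⊔ Ideal.span {x})) := by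
    rw [Ideal.length_quotient_eq_length_quotient_colon_add]
    exact add_le_add_left (Ideal.length_quotient_le_of_le (hLcolon e)) _
  have hsup : Module.length R (R ⧸ (I e ⊔ Ideal.span {x})) ≤ (C * (c * p ^ e) ^ (d - 1) : ℕ) :=
    (Ideal.length_quotient_le_of_le (sup_le_sup_right (hI e) _)).trans (hC _)
  obtain ⟨hLI, hdiff⟩ := ENat.toNat_le_toNat_and_sub_le
    (length_quotient_ne_top_of_maximalIdeal_pow_le (hI e))
    (Ideal.length_quotient_le_of_le (hIL e))
    (hcolon.trans (add_le_add_right hsup _))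
  rw [lengthNat_eq_toNat_length, lengthNat_eq_toNat_length]
  refine ⟨hLI, hdiff.trans ?_⟩
  calc ((C * (c * p ^ e) ^ (d - 1) : ℕ) : ℝ) = C * c ^ (d - 1) * (p : ℝ) ^ (e * (d - 1)) := by
        push_cast
        ring
    _ ≤ (C * c ^ (d - 1) + 1) * (p : ℝ) ^ (e * (d - 1)) := by gcongr; linarith

/-- if `I_q ⊆ L_q ⊆ (I_q : x)` for a nonzerodivisor `x`, then
`0 ≤ ℓ(R/I_q) − ℓ(R/L_q) ≤ γ q^{d−1}`. -/
theorem length_difference_bound_for_colon_squeeze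
    (R : Type*) [CommRing R] [IsNoetherianRing R] [IsLocalRing R]
    (d : ℕ) (hd1 : 1 ≤ d) (hd : ringKrullDim R = d)
    (p : ℕ) (hp : p.Prime)
    (I L : ℕ → Ideal R) (c : ℕ) (hc : 0 < c)
    (hI : ∀ e : ℕ, (maximalIdeal R) ^ (c * p ^ e) ≤ I e)
    (x : R) (hx : x ∈ nonZeroDivisors R)
    (hIL : ∀ e : ℕ, I e ≤ L e)
    (hLcolon : ∀ e : ℕ, L e ≤ (I e).colon (Ideal.span {x})) :
    ∃ γ : ℝ, 0 < γ ∧ ∀ e : ℕ,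
      (lengthNat R (R ⧸ L e) : ℝ) ≤ (lengthNat R (R ⧸ I e) : ℝ) ∧
      (lengthNat R (R ⧸ I e) : ℝ) - (lengthNat R (R ⧸ L e) : ℝ)
        ≤ γ * (p : ℝ) ^ (e * (d - 1)) :=
  length_difference_bound_for_colon_squeeze_general R d hd p I L c hI x hx hIL hLcolon
end

section
/- Let (R,m) be a Noetherian local ring of prime characteristic p > 0, and let I be an ideal of R with dim(R/I) = 1. Suppose there exists a positive integer c such that m^{cq}·(I^{[q]})^{sat} ⊆ I^{[q]} for every power q = p^e of p. Then there exists a positive integer b such that m^{bq} ∩ (I^{[q]})^{sat} = m^{bq} ∩ I^{[q]} for every power q = p^e of p. -/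
/-!
Since `dim R/I = 1`, prime avoidance gives `x ∈ m` outside every minimal prime of `I`, and then
`m^a ⊆ I + (x)`. Applying Frobenius and comparing `m^{[q]}` with ordinary powers of `m` yields
`m^{Nq} ⊆ I^{[q]} + (x^q)` with `N` independent of `q`, hence `m^{bq} ⊆ I^{[q]} + (x^{cq})` for
`b = N(c+1)`. A saturated `u ∈ m^{bq}` is then `j + v x^{cq}` with `j ∈ I^{[q]}`; condition (LC)
applied to `v x^{cq}` shows that `v` is saturated, and applied to `v` it puts `v x^{cq}` in `I^{[q]}`.
-/

open IsLocalRing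

/-- The `q`-th Frobenius (bracket) power `J^{[q]}` of an ideal `J`. -/
def frobPow {R : Type*} [CommRing R] (J : Ideal R) (q : ℕ) : Ideal R :=
  Ideal.span ((fun x => x ^ q) '' (J : Set R))

/-- The saturation `J^{sat} = (J : m^∞) = {x ∈ R : m^n x ⊆ J for some n}` of an ideal `J`
of a local ring. -/
def satIdeal {R : Type*} [CommRing R] [IsLocalRing R] (J : Ideal R) : Ideal R where
  carrier := {x : R | ∃ n : ℕ, ∀ y ∈ (maximalIdeal R) ^ n, y * x ∈ J}
  zero_mem' := ⟨0, fun y _ => by simp⟩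
  add_mem' := by
    rintro a b ⟨n, hn⟩ ⟨m, hm⟩
    refine ⟨n + m, fun y hy => ?_⟩
    rw [mul_add]
    exact J.add_mem (hn y (Ideal.pow_le_pow_right (Nat.le_add_right n m) hy))
      (hm y (Ideal.pow_le_pow_right (Nat.le_add_left m n) hy))
  smul_mem' := by
    rintro cc x ⟨n, hn⟩
    refine ⟨n, fun y hy => ?_⟩
    rw [smul_eq_mul, show y * (cc * x) = cc * (y * x) by ring]
    exact J.mul_mem_left cc (hn y hy)

section IdealPowers

variable {R : Type*} [CommRing R]

lemma Ideal.span_pow_card_mul_add_one_le_span_image_pow (s : Finset R) (q : ℕ) :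
    Ideal.span (s : Set R) ^ (s.card * q + 1) ≤ Ideal.span ((· ^ q) '' (s : Set R)) := by
  classical
  induction s using Finset.induction_on with
  | empty => simp
  | @insert a s ha ih =>
    rw [Finset.card_insert_of_notMem ha, Finset.coe_insert, Ideal.span_insert,
      Set.image_insert_eq, Ideal.span_insert, add_one_mul, add_comm _ q, add_assoc]
    refine Ideal.sup_pow_add_le_pow_sup_pow.trans (sup_le ?_ (ih.trans le_sup_right))
    rw [Ideal.span_singleton_pow]
    exact le_sup_left

lemma Ideal.pow_mul_succ_le_sup_span_singleton_pow {K A : Ideal R}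
    {y : R} {n : ℕ} (h : K ^ n ≤ A ⊔ Ideal.span {y}) (k : ℕ) :
    K ^ (n * (k + 1)) ≤ A ⊔ Ideal.span {y ^ k} :=
  calc K ^ (n * (k + 1)) ≤ (A ⊔ Ideal.span {y}) ^ (1 + k) := by
        rw [pow_mul, add_comm]
        exact Ideal.pow_right_mono h _
    _ ≤ A ⊔ Ideal.span {y ^ k} := by
        simpa only [pow_one, Ideal.span_singleton_pow] using
          Ideal.sup_pow_add_le_pow_sup_pow (I := A) (J := Ideal.span {y}) (n := 1) (m := k)

end IdealPowers

section FrobeniusPower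

variable {R : Type*} [CommRing R]

lemma frobPow_mono {J K : Ideal R} (h : J ≤ K) (q : ℕ) : frobPow J q ≤ frobPow K q :=
  Ideal.span_mono (Set.image_mono h)

lemma exists_pow_mul_add_one_le_frobPow {K : Ideal R} (hK : K.FG) :
    ∃ t : ℕ, ∀ q : ℕ, K ^ (t * q + 1) ≤ frobPow K q := by
  obtain ⟨s, rfl⟩ := hK
  exact ⟨s.card, fun q => (Ideal.span_pow_card_mul_add_one_le_span_image_pow s q).trans
    (Ideal.span_mono (Set.image_mono Ideal.subset_span))⟩

variable (p : ℕ) [ExpChar R p]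

lemma frobPow_eq_map_iterateFrobenius (J : Ideal R) (e : ℕ) :
    frobPow J (p ^ e) = J.map (iterateFrobenius R p e) := by
  simp only [frobPow, Ideal.map, iterateFrobenius_def]
  rfl

lemma frobPow_pow (J : Ideal R) (a e : ℕ) : frobPow (J ^ a) (p ^ e) = frobPow J (p ^ e) ^ a := by
  simp only [frobPow_eq_map_iterateFrobenius, Ideal.map_pow]

lemma frobPow_sup_span_singleton (J : Ideal R) (x : R) (e : ℕ) :
    frobPow (J ⊔ Ideal.span {x}) (p ^ e) = frobPow J (p ^ e) ⊔ Ideal.span {x ^ p ^ e} := by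
  simp only [frobPow_eq_map_iterateFrobenius, Ideal.map_sup, Ideal.map_span, Set.image_singleton,
    iterateFrobenius_def]

lemma exists_pow_mul_le_frobPow_of_pow_le {K L : Ideal R} (hK : K.FG) {a : ℕ} (h : K ^ a ≤ L) :
    ∃ N : ℕ, 0 < N ∧ ∀ e : ℕ, K ^ (N * p ^ e) ≤ frobPow L (p ^ e) := by
  obtain ⟨t, ht⟩ := exists_pow_mul_add_one_le_frobPow hK
  refine ⟨(t + 1) * (a + 1), by positivity, fun e => ?_⟩
  have hq := expChar_pow_pos R p e
  calc K ^ ((t + 1) * (a + 1) * p ^ e)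
      ≤ (K ^ (t * p ^ e + 1)) ^ a := by
        rw [← pow_mul]
        exact Ideal.pow_le_pow_right (by nlinarith)
    _ ≤ frobPow K (p ^ e) ^ a := Ideal.pow_right_mono (ht _) a
    _ = frobPow (K ^ a) (p ^ e) := (frobPow_pow p K a e).symm
    _ ≤ frobPow L (p ^ e) := frobPow_mono h _

end FrobeniusPower

section Saturation

variable {R : Type*} [CommRing R] [IsLocalRing R] {J : Ideal R}

lemma le_satIdeal (J : Ideal R) : J ≤ satIdeal J :=
  fun _ hz => ⟨0, fun y _ => J.mul_mem_left y hz⟩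

lemma mem_satIdeal_of_mul_mem {y z : R} {n : ℕ}
    (hn : maximalIdeal R ^ n ≤ J ⊔ Ideal.span {y}) (hyz : y * z ∈ J) : z ∈ satIdeal J := by
  refine ⟨n, fun t ht => ?_⟩
  obtain ⟨j, hj, w, hw, rfl⟩ := Submodule.mem_sup.mp (hn ht)
  obtain ⟨r, rfl⟩ := Ideal.mem_span_singleton'.mp hw
  rw [add_mul, mul_assoc]
  exact J.add_mem (J.mul_mem_right z hj) (J.mul_mem_left r hyz)

lemma inf_satIdeal_eq_inf_of_le_sup_span_singleton {x : R} (hx : x ∈ maximalIdeal R) {d n : ℕ}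
    (hd : maximalIdeal R ^ d * satIdeal J ≤ J)
    (hn : maximalIdeal R ^ n ≤ J ⊔ Ideal.span {x ^ d}) :
    maximalIdeal R ^ n ⊓ satIdeal J = maximalIdeal R ^ n ⊓ J := by
  refine le_antisymm (fun u ⟨huM, husat⟩ => ⟨huM, ?_⟩) (inf_le_inf_left _ (le_satIdeal J))
  have hxd : x ^ d ∈ maximalIdeal R ^ d := Ideal.pow_mem_pow hx d
  obtain ⟨j, hj, w, hw, rfl⟩ := Submodule.mem_sup.mp (hn huM)
  obtain ⟨v, rfl⟩ := Ideal.mem_span_singleton'.mp hw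
  have hw_sat : v * x ^ d ∈ satIdeal J := by
    simpa using (satIdeal J).sub_mem husat (le_satIdeal J hj)
  have hv_sat : v ∈ satIdeal J := by
    refine mem_satIdeal_of_mul_mem (Ideal.pow_mul_succ_le_sup_span_singleton_pow hn 2) ?_
    convert hd (Ideal.mul_mem_mul hxd hw_sat) using 1
    ring
  rw [mul_comm v]
  exact J.add_mem hj (hd (Ideal.mul_mem_mul hxd hv_sat))

end Saturation

section DimensionOne

variable {R : Type*} [CommRing R] [IsLocalRing R] {I : Ideal R}

lemma maximalIdeal_notMem_minimalPrimes_of_one_le_ringKrullDim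
    (h : 1 ≤ ringKrullDim (R ⧸ I)) : maximalIdeal R ∉ I.minimalPrimes := by
  rw [ringKrullDim_quotient, Order.one_le_krullDim_iff] at h
  obtain ⟨⟨P, hIP⟩, ⟨Q, _⟩, hPQ⟩ := h
  intro hm
  have hmP : maximalIdeal R ≤ P.asIdeal := hm.2 ⟨P.isPrime, hIP⟩ (le_maximalIdeal P.isPrime.ne_top)
  exact (le_maximalIdeal Q.isPrime.ne_top |>.trans hmP).not_gt hPQ

lemma maximalIdeal_le_radical_sup_span_singleton (h : ringKrullDim (R ⧸ I) ≤ 1) {x : R}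
    (hx : ∀ P ∈ I.minimalPrimes, x ∉ P) : maximalIdeal R ≤ (I ⊔ Ideal.span {x}).radical := by
  rw [ringKrullDim_quotient, Order.krullDim_le_one_iff] at h
  rw [Ideal.radical_eq_sInf]
  refine le_sInf fun P ⟨hIxP, hP⟩ => ?_
  have hIP : I ≤ P := le_sup_left.trans hIxP
  obtain ⟨P₀, hP₀, hP₀P⟩ := Ideal.exists_minimalPrimes_le hIP
  rcases h ⟨⟨P, hP⟩, hIP⟩ with hmin | hmax
  · have hxP : x ∈ P := hIxP (Ideal.mem_sup_right (Ideal.mem_span_singleton_self x))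
    have hlt : P₀ < P := lt_of_le_of_ne hP₀P (by rintro rfl; exact hx P₀ hP₀ hxP)
    exact (hmin.not_lt (b := (⟨⟨P₀, hP₀.1.1⟩, hP₀.1.2⟩ : PrimeSpectrum.zeroLocus (I : Set R)))
      hlt).elim
  · exact hmax (b := ⟨⟨maximalIdeal R, inferInstance⟩, hIP.trans (le_maximalIdeal hP.ne_top)⟩)
      (le_maximalIdeal hP.ne_top)

variable [IsNoetherianRing R]

lemma exists_mem_maximalIdeal_forall_notMem_minimalPrimes
    (hI : maximalIdeal R ∉ I.minimalPrimes) :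
    ∃ x ∈ maximalIdeal R, ∀ P ∈ I.minimalPrimes, x ∉ P := by
  have := (Ideal.subset_iUnion_iff_mem_of_isMaximal_of_finite
    (I.finite_minimalPrimes_of_isNoetherianRing R) ⊥ ⊥ (fun P hP _ _ => hP.1.1)
    bot_ne_top bot_ne_top).not.mpr hI
  simpa [Set.not_subset] using this

lemma exists_pow_maximalIdeal_le_sup_span_singleton (h : ringKrullDim (R ⧸ I) = 1) :
    ∃ x ∈ maximalIdeal R, ∃ a : ℕ, maximalIdeal R ^ a ≤ I ⊔ Ideal.span {x} := by
  obtain ⟨x, hxm, hx⟩ := exists_mem_maximalIdeal_forall_notMem_minimalPrimes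
    (maximalIdeal_notMem_minimalPrimes_of_one_le_ringKrullDim h.ge)
  exact ⟨x, hxm, Ideal.exists_pow_le_of_le_radical_of_fg
    (maximalIdeal_le_radical_sup_span_singleton h.le hx) (IsNoetherian.noetherian _)⟩

end DimensionOne

theorem LC_implies_uniform_intersection_condition_dim_one_general
    (R : Type*) [CommRing R] [IsNoetherianRing R] [IsLocalRing R]
    (p : ℕ) (hp : p.Prime) [CharP R p]
    (I : Ideal R) (hdim : ringKrullDim (R ⧸ I) = 1)
    (c : ℕ)
    (hLC : ∀ e : ℕ, (maximalIdeal R) ^ (c * p ^ e) * satIdeal (frobPow I (p ^ e))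
      ≤ frobPow I (p ^ e)) :
    ∃ b : ℕ, 0 < b ∧ ∀ e : ℕ,
      (maximalIdeal R) ^ (b * p ^ e) ⊓ satIdeal (frobPow I (p ^ e))
        = (maximalIdeal R) ^ (b * p ^ e) ⊓ frobPow I (p ^ e) := by
  have : Fact p.Prime := ⟨hp⟩
  obtain ⟨x, hxm, a, ha⟩ := exists_pow_maximalIdeal_le_sup_span_singleton hdim
  obtain ⟨N, hN, hNle⟩ :=
    exists_pow_mul_le_frobPow_of_pow_le p (IsNoetherian.noetherian (maximalIdeal R)) ha
  refine ⟨N * (c + 1), by positivity, fun e => ?_⟩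
  refine inf_satIdeal_eq_inf_of_le_sup_span_singleton hxm (hLC e) ?_
  have hbound := Ideal.pow_mul_succ_le_sup_span_singleton_pow
    ((hNle e).trans_eq (frobPow_sup_span_singleton p I x e)) c
  rwa [← pow_mul, mul_comm _ c, mul_right_comm] at hbound

/-- for an ideal `I` with `dim(R/I) = 1` satisfying the condition (LC), the
saturations of the Frobenius powers agree with the Frobenius powers along powers of `m`. -/
theorem LC_implies_uniform_intersection_condition_dim_one
    (R : Type*) [CommRing R] [IsNoetherianRing R] [IsLocalRing R]
    (p : ℕ) (hp : p.Prime) [CharP R p]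
    (I : Ideal R) (hdim : ringKrullDim (R ⧸ I) = 1)
    (c : ℕ) (hc : 0 < c)
    (hLC : ∀ e : ℕ, (maximalIdeal R) ^ (c * p ^ e) * satIdeal (frobPow I (p ^ e))
      ≤ frobPow I (p ^ e)) :
    ∃ b : ℕ, 0 < b ∧ ∀ e : ℕ,
      (maximalIdeal R) ^ (b * p ^ e) ⊓ satIdeal (frobPow I (p ^ e))
        = (maximalIdeal R) ^ (b * p ^ e) ⊓ frobPow I (p ^ e) :=
  LC_implies_uniform_intersection_condition_dim_one_general R p hp I hdim c hLC
end
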